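/- arXiv:1912.06770 — 4 statements merged into one kernel-verified Lean document; each statement's English description precedes it below -/
import Mathlib

section
/- Let L ≥ 2, let S be a dense subset of the circle ℝ/Lℤ, and let G be a graph on vertex set S that is geometrically existentially closed and has unit threshold (adjacent vertices are at distance < 1). Then for all u, v ∈ S and every integer k ≥ 2: d(u,v) < k if and only if the graph distance between u and v in G is at most k. -/
/-- Geometric existential closure for a graph on a subset `S` of the circle. -/
def IsGEC {L : ℝ} {S : Set (AddCircle L)} (G : SimpleGraph S) : Prop :=
  ∀ (s : S) (A B : Finset S), Disjoint A B →
    (∀ a ∈ A, dist (a : AddCircle L) (s : AddCircle L) < 1) →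
    (∀ b ∈ B, dist (b : AddCircle L) (s : AddCircle L) < 1) →
    ∀ ε : ℝ, 0 < ε →
      ∃ v : S, v ∉ A ∧ v ∉ B ∧ (∀ a ∈ A, G.Adj v a) ∧ (∀ b ∈ B, ¬ G.Adj v b) ∧
        dist (v : AddCircle L) (s : AddCircle L) < ε

/-- Adjacent vertices are at circle distance less than 1. -/
def HasUnitThreshold {L : ℝ} {S : Set (AddCircle L)} (G : SimpleGraph S) : Prop :=
  ∀ u v : S, G.Adj u v → dist (u : AddCircle L) (v : AddCircle L) < 1

/-!
The circle is a length space: if `d(x, y) < a + b` there is a point `z` with `d(x, z) < a` and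
`d(z, y) < b`. Density and geometric existential closure turn any such `z` into a vertex close
to `z` that is adjacent to prescribed vertices within distance `1` of `z`. Splitting
`d(w, v) < 2` as `1 + 1` gives a common neighbour of `w` and `v`; splitting `d(w, v) < m + 1` as
`1 + m` gives a neighbour of `w` at distance `< m` from `v`, and induction on `m` bounds the graph
distance. Conversely, by unit threshold every edge of a walk moves less than `1` along the circle.
-/

namespace AddCircle

variable {L : ℝ}

theorem norm_coe_le_abs (r : ℝ) : ‖(r : AddCircle L)‖ ≤ |r| :=
  QuotientAddGroup.norm_mk_le_norm

theorem exists_coe_eq_abs_eq_norm (x : AddCircle L) :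
    ∃ r : ℝ, (r : AddCircle L) = x ∧ |r| = ‖x‖ := by
  obtain ⟨r, rfl⟩ := QuotientAddGroup.mk_surjective x
  refine ⟨r - round (L⁻¹ * r) * L, ?_, (norm_eq L).symm⟩
  rw [coe_sub, sub_eq_self, ← zsmul_eq_mul, coe_zsmul, coe_period, smul_zero]

theorem exists_dist_le_mul_dist_le_one_sub_mul (x y : AddCircle L) {θ : ℝ} (hθ₀ : 0 ≤ θ)
    (hθ₁ : θ ≤ 1) : ∃ z, dist x z ≤ θ * dist x y ∧ dist z y ≤ (1 - θ) * dist x y := by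
  obtain ⟨r, hr, hr_norm⟩ := exists_coe_eq_abs_eq_norm (y - x)
  have hxy : dist x y = |r| := by rw [hr_norm, dist_comm, dist_eq_norm]
  refine ⟨x + ↑(θ * r), ?_, ?_⟩
  · calc dist x (x + ↑(θ * r)) = ‖((θ * r : ℝ) : AddCircle L)‖ := by
          rw [dist_comm, dist_eq_norm, add_sub_cancel_left]
      _ ≤ θ * dist x y :=
          (norm_coe_le_abs _).trans_eq (by rw [abs_mul, abs_of_nonneg hθ₀, hxy])
  · calc dist (x + ↑(θ * r)) y = ‖(((1 - θ) * r : ℝ) : AddCircle L)‖ := by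
          rw [dist_comm, dist_eq_norm, sub_add_eq_sub_sub, ← hr, ← coe_sub, sub_mul, one_mul]
      _ ≤ (1 - θ) * dist x y :=
          (norm_coe_le_abs _).trans_eq (by rw [abs_mul, abs_of_nonneg (sub_nonneg.2 hθ₁), hxy])

theorem exists_dist_lt_dist_lt {x y : AddCircle L} {a b : ℝ} (ha : 0 < a) (hb : 0 < b)
    (h : dist x y < a + b) : ∃ z, dist x z < a ∧ dist z y < b := by
  have hab : 0 < a + b := by positivity
  obtain ⟨z, hxz, hzy⟩ := exists_dist_le_mul_dist_le_one_sub_mul x y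
    (div_nonneg ha.le hab.le) ((div_le_one hab).2 (by linarith))
  refine ⟨z, hxz.trans_lt ?_, hzy.trans_lt ?_⟩
  · calc a / (a + b) * dist x y < a / (a + b) * (a + b) := by gcongr
      _ = a := div_mul_cancel₀ a hab.ne'
  · calc (1 - a / (a + b)) * dist x y < (1 - a / (a + b)) * (a + b) := by
          gcongr; rw [sub_pos, div_lt_one hab]; linarith
      _ = b := by field_simp; ring

end AddCircle

section

variable {L : ℝ} {S : Set (AddCircle L)} {G : SimpleGraph S}

theorem IsGEC.exists_adj_forall_dist_lt (hS : Dense S) (hG : IsGEC G) (A : Finset S)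
    {z : AddCircle L} (hA : ∀ a ∈ A, dist (a : AddCircle L) z < 1) {ε : ℝ} (hε : 0 < ε) :
    ∃ x : S, (∀ a ∈ A, G.Adj x a) ∧ dist (x : AddCircle L) z < ε := by
  set U := Metric.ball z (ε / 2) ∩ ⋂ a ∈ A, Metric.ball (a : AddCircle L) 1
  have hU : IsOpen U :=
    Metric.isOpen_ball.inter (isOpen_biInter_finset fun _ _ ↦ Metric.isOpen_ball)
  have hzU : z ∈ U :=
    ⟨Metric.mem_ball_self (half_pos hε), Set.mem_iInter₂.2 fun a ha ↦ Metric.mem_ball'.2 (hA a ha)⟩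
  obtain ⟨s, ⟨hsz, hsA⟩, hsS⟩ := hS.inter_open_nonempty U hU ⟨z, hzU⟩
  obtain ⟨x, -, -, hxA, -, hxs⟩ := hG ⟨s, hsS⟩ A ∅ (Finset.disjoint_empty_right A)
    (fun a ha ↦ Metric.mem_ball'.1 (Set.mem_iInter₂.1 hsA a ha)) (by simp) (ε / 2) (half_pos hε)
  refine ⟨x, hxA, ?_⟩
  calc dist (x : AddCircle L) z ≤ dist (x : AddCircle L) s + dist s z := dist_triangle _ _ _
    _ < ε / 2 + ε / 2 := add_lt_add hxs hsz
    _ = ε := add_halves ε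

theorem IsGEC.edist_le_of_dist_lt (hS : Dense S) (hG : IsGEC G) (v : S) {m : ℕ} (hm : 2 ≤ m)
    (w : S) (hwv : dist (w : AddCircle L) (v : AddCircle L) < m) : G.edist w v ≤ m := by
  induction m, hm using Nat.le_induction generalizing w with
  | base =>
    obtain ⟨z, hwz, hzv⟩ := AddCircle.exists_dist_lt_dist_lt one_pos one_pos
      (by norm_num at hwv ⊢; exact hwv)
    obtain ⟨x, hx, -⟩ := hG.exists_adj_forall_dist_lt hS {w, v} (z := z)
      (by simpa [dist_comm (v : AddCircle L)] using ⟨hwz, hzv⟩) one_pos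
    calc G.edist w v ≤ G.edist w x + G.edist x v := SimpleGraph.edist_triangle
      _ = 2 := by
        rw [SimpleGraph.edist_eq_one_iff_adj.2 (hx w (by simp)).symm,
          SimpleGraph.edist_eq_one_iff_adj.2 (hx v (by simp))]
        rfl
  | succ m hm ih =>
    obtain ⟨z, hwz, hzv⟩ := AddCircle.exists_dist_lt_dist_lt one_pos (by positivity : (0 : ℝ) < m)
      (by push_cast at hwv; linarith)
    obtain ⟨x, hx, hxz⟩ := hG.exists_adj_forall_dist_lt hS {w} (z := z)
      (by simpa using hwz) (sub_pos.2 hzv)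
    have hxv : dist (x : AddCircle L) v < m := by
      linarith [dist_triangle (x : AddCircle L) z v]
    calc G.edist w v ≤ G.edist w x + G.edist x v := SimpleGraph.edist_triangle
      _ ≤ 1 + m := by
        gcongr
        · exact (SimpleGraph.edist_eq_one_iff_adj.2 (hx w (by simp)).symm).le
        · exact ih x hxv
      _ = ↑(m + 1) := by push_cast; ring

theorem HasUnitThreshold.dist_lt_length (hG : HasUnitThreshold G) {a b : S} (p : G.Walk a b)
    (hp : p.length ≠ 0) : dist (a : AddCircle L) b < p.length := by
  induction p with
  | nil => exact absurd rfl hp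
  | @cons a c b hac p ih =>
    have hcb : dist (c : AddCircle L) b ≤ p.length := by
      by_cases h0 : p.length = 0
      · simp [p.eq_of_length_eq_zero h0]
      · exact (ih h0).le
    calc dist (a : AddCircle L) b ≤ dist (a : AddCircle L) c + dist (c : AddCircle L) b :=
          dist_triangle _ _ _
      _ < 1 + p.length := add_lt_add_of_lt_of_le (hG a c hac) hcb
      _ = (p.cons hac).length := by push_cast [SimpleGraph.Walk.length_cons]; ring

theorem HasUnitThreshold.dist_lt_of_edist_le (hG : HasUnitThreshold G) {u v : S} {n : ℕ}
    (hn : n ≠ 0) (h : G.edist u v ≤ n) : dist (u : AddCircle L) v < n := by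
  by_cases huv : u = v
  · simpa [huv] using Nat.pos_of_ne_zero hn
  obtain ⟨p, hp⟩ := (SimpleGraph.reachable_of_edist_ne_top
    (h.trans_lt (ENat.natCast_lt_top n)).ne).exists_walk_length_eq_edist
  have hpn : p.length ≤ n := by exact_mod_cast hp ▸ h
  calc dist (u : AddCircle L) v < p.length :=
        hG.dist_lt_length p fun h0 ↦ huv (p.eq_of_length_eq_zero h0)
    _ ≤ n := by exact_mod_cast hpn

end

theorem stmt_6_general (L : ℝ) (S : Set (AddCircle L)) (hSdense : Dense S)
    (G : SimpleGraph S) (hgec : IsGEC G) (hut : HasUnitThreshold G)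
    (u v : S) (k : ℕ) (hk : 2 ≤ k) :
    dist (u : AddCircle L) (v : AddCircle L) < (k : ℝ) ↔ G.edist u v ≤ (k : ℕ∞) :=
  ⟨hgec.edist_le_of_dist_lt hSdense v hk u, hut.dist_lt_of_edist_le (by omega)⟩

/-- For a g.e.c. unit-threshold graph on a dense subset of `ℝ/Lℤ` with `L ≥ 2` and `k ≥ 2`:
`d(u,v) < k` iff the graph distance between `u` and `v` is at most `k`. -/
theorem stmt_6 (L : ℝ) (hL : 2 ≤ L) (S : Set (AddCircle L)) (hSdense : Dense S)
    (G : SimpleGraph S) (hgec : IsGEC G) (hut : HasUnitThreshold G)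
    (u v : S) (k : ℕ) (hk : 2 ≤ k) :
    dist (u : AddCircle L) (v : AddCircle L) < (k : ℝ) ↔ G.edist u v ≤ (k : ℕ∞) :=
  stmt_6_general L S hSdense G hgec hut u v k hk
end

section
/- Let L ≥ 2, let S be dense in ℝ/Lℤ, and let G be a g.e.c. graph with unit threshold on S. A finite set U ⊆ S is contained in an open arc of length 2 (i.e., U ⊆ (v−1, v+1) for some v ∈ S) if and only if there exists a vertex w ∈ S adjacent in G to every vertex of U. -/
theorem IsGEC.exists_forall_adj {L : ℝ} {S : Set (AddCircle L)} {G : SimpleGraph S}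
    (hG : IsGEC G) {v : S} {U : Finset S}
    (hU : ∀ u ∈ U, dist (u : AddCircle L) (v : AddCircle L) < 1) :
    ∃ w : S, ∀ u ∈ U, G.Adj w u := by
  obtain ⟨w, -, -, hadj, -⟩ :=
    hG v U ∅ (Finset.disjoint_empty_right U) hU (by simp) 1 one_pos
  exact ⟨w, hadj⟩

theorem HasUnitThreshold.forall_dist_lt_of_forall_adj {L : ℝ} {S : Set (AddCircle L)}
    {G : SimpleGraph S} (hG : HasUnitThreshold G) {w : S} {U : Finset S}
    (hw : ∀ u ∈ U, G.Adj w u) :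
    ∀ u ∈ U, dist (u : AddCircle L) (w : AddCircle L) < 1 :=
  fun u hu => hG u w (hw u hu).symm

theorem stmt_8_general (L : ℝ) (S : Set (AddCircle L))
    (G : SimpleGraph S) (hgec : IsGEC G) (hut : HasUnitThreshold G)
    (U : Finset S) :
    (∃ v : S, ∀ u ∈ U, dist (u : AddCircle L) (v : AddCircle L) < 1) ↔
      (∃ w : S, ∀ u ∈ U, G.Adj w u) :=
  ⟨fun ⟨_, hv⟩ => hgec.exists_forall_adj hv,
    fun ⟨w, hw⟩ => ⟨w, hut.forall_dist_lt_of_forall_adj hw⟩⟩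

/-- A finite set `U ⊆ S` lies in an open arc of length 2 centered at some `v ∈ S` iff some
vertex `w` of the g.e.c. unit-threshold graph `G` is adjacent to every element of `U`. -/
theorem stmt_8 (L : ℝ) (hL : 2 ≤ L) (S : Set (AddCircle L)) (hSdense : Dense S)
    (G : SimpleGraph S) (hgec : IsGEC G) (hut : HasUnitThreshold G)
    (U : Finset S) :
    (∃ v : S, ∀ u ∈ U, dist (u : AddCircle L) (v : AddCircle L) < 1) ↔
      (∃ w : S, ∀ u ∈ U, G.Adj w u) :=
  stmt_8_general L S G hgec hut U
end

section
/- Let L = ℓ/m > 2 be rational in lowest terms, and let S, S' be dense countable integer-distance-free subsets of ℝ/Lℤ. If G is a g.e.c. unit-threshold graph on S and G' is a g.e.c. unit-threshold graph on S', then G and G' are isomorphic as graphs. -/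
/-- `S` is integer-distance-free for `L = ℓ/m`: no two distinct points of `S` are at a distance
which is a multiple of `1/m`. -/
def IntegerDistanceFree {L : ℝ} (m : ℕ) (S : Set (AddCircle L)) : Prop :=
  ∀ u ∈ S, ∀ v ∈ S, u ≠ v → ∀ j : ℕ, dist u v ≠ (j : ℝ) / (m : ℝ)

open Set

noncomputable section

namespace UnitThresholdGraph

section

variable {R : Type*} [CommRing R] [LinearOrder R] [IsStrictOrderedRing R] [FloorRing R]

lemma floor_sub_eq (a b : R) : ⌊a - b⌋ = ⌊a⌋ - ⌊b⌋ + ⌊Int.fract a - Int.fract b⌋ := by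
  have : a - b = Int.fract a - Int.fract b + ((⌊a⌋ - ⌊b⌋ : ℤ) : R) := by
    push_cast; simp only [Int.fract]; ring
  rw [this, Int.floor_add_intCast]
  ring

lemma floor_fract_sub_fract (a b : R) :
    ⌊Int.fract a - Int.fract b⌋ = if Int.fract b ≤ Int.fract a then 0 else -1 := by
  have ha := Int.fract_nonneg a
  have hb := Int.fract_nonneg b
  have ha' := Int.fract_lt_one a
  have hb' := Int.fract_lt_one b
  split_ifs with h
  · rw [Int.floor_eq_iff]; push_cast; constructor <;> linarith
  · rw [Int.floor_eq_iff]; push_cast; constructor <;> linarith [not_le.mp h]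

end

section

variable {α β : Type*}

def Coherent (R : α × β → α × β → Prop) (c : List (α × β)) : Prop := ∀ p ∈ c, ∀ q ∈ c, R p q

lemma Coherent.cons {R : α × β → α × β → Prop} {c : List (α × β)} {p : α × β}
    (hc : Coherent R c) (hp : ∀ q ∈ p :: c, R p q ∧ R q p) : Coherent R (p :: c) := by
  intro q hq r hr
  rcases List.mem_cons.mp hq with rfl | hqc
  · exact (hp r hr).1
  rcases List.mem_cons.mp hr with rfl | hrc
  · exact (hp q hq).2
  · exact hc q hqc r hrc

theorem exists_equiv_of_back_and_forth [Countable α] [Countable β] [Nonempty α] [Nonempty β]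
    (R : α × β → α × β → Prop) (hR : ∀ p q, R p q → (p.1 = q.1 ↔ p.2 = q.2))
    (forth : ∀ c, Coherent R c → ∀ a, ∃ b, Coherent R ((a, b) :: c))
    (back : ∀ c, Coherent R c → ∀ b, ∃ a, Coherent R ((a, b) :: c)) :
    ∃ e : α ≃ β, ∀ a a', R (a, e a) (a', e a') := by
  obtain ⟨f, hf⟩ := exists_surjective_nat α
  obtain ⟨g, hg⟩ := exists_surjective_nat β
  choose F hF using forth
  choose B hB using back
  let step (n : ℕ) (c : {c // Coherent R c}) : {c // Coherent R c} :=
    ⟨_, hB _ (hF c.1 c.2 (f n)) (g n)⟩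
  let chain (n : ℕ) : {c // Coherent R c} := Nat.rec ⟨[], by simp [Coherent]⟩ step n
  have hmono : Monotone fun n => {p | p ∈ (chain n).1} :=
    monotone_nat_of_le_succ fun n _ hp => List.mem_cons_of_mem _ (List.mem_cons_of_mem _ hp)
  have hchain : ∀ {p q}, (∃ n, p ∈ (chain n).1) → (∃ n, q ∈ (chain n).1) → R p q := by
    rintro p q ⟨i, hi⟩ ⟨j, hj⟩
    exact (chain (max i j)).2 p (hmono (le_max_left i j) hi) q (hmono (le_max_right i j) hj)
  have hdom : ∀ a, ∃ b, ∃ n, (a, b) ∈ (chain n).1 := by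
    intro a
    obtain ⟨n, rfl⟩ := hf a
    exact ⟨_, n + 1, List.mem_cons_of_mem _ List.mem_cons_self⟩
  choose φ hφ using hdom
  have hinj : Function.Injective φ := fun a a' h => (hR _ _ (hchain (hφ a) (hφ a'))).mpr h
  have hsurj : Function.Surjective φ := by
    intro b
    obtain ⟨n, rfl⟩ := hg b
    have hmem : ∃ k, (_, g n) ∈ (chain k).1 := ⟨n + 1, List.mem_cons_self⟩
    exact ⟨_, (hR _ _ (hchain (hφ _) hmem)).mp rfl⟩
  exact ⟨Equiv.ofBijective φ ⟨hinj, hsurj⟩, fun a a' => hchain (hφ a) (hφ a')⟩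

end

variable {L : ℝ} {l m : ℕ}

lemma coe_add_intCast_mul_div (hm : 0 < m) (hml : (m : ℝ) * L = l) (x : ℝ) (n : ℤ) :
    (((x + n * l) / m : ℝ) : AddCircle L) = ((x / m : ℝ) : AddCircle L) := by
  have : (x + n * l) / m = x / m + n * L := by
    rw [← hml]; field_simp
  rw [this, AddCircle.coe_add, add_eq_left, AddCircle.coe_eq_zero_iff]
  exact ⟨n, zsmul_eq_mul _ _⟩

lemma exists_adj_iff_of_isGEC {S : Set (AddCircle L)} {G : SimpleGraph S} (hgec : IsGEC G)
    (hut : HasUnitThreshold G) (hS : Dense S) {ι : Type*} (I : Finset ι) (y : ι → S)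
    (P N : ι → Prop)
    (hP : ∀ i ∈ I, ∀ j ∈ I, y i = y j → (P i ↔ P j)) (hPN : ∀ i ∈ I, P i → N i)
    {t : AddCircle L} {ε : ℝ} (hε : 0 < ε)
    (hnear : ∀ z : AddCircle L, dist z t < ε → ∀ i ∈ I, (dist z (y i) < 1 ↔ N i)) :
    ∃ v : S, dist (v : AddCircle L) t < ε ∧ ∀ i ∈ I, (G.Adj v (y i) ↔ P i) := by
  classical
  obtain ⟨z, hzt, hzS⟩ := Metric.dense_iff.mp hS t (ε / 2) (by positivity)
  have hzt : dist z t < ε / 2 := hzt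
  have hclose : ∀ i ∈ I, N i → dist (y i : AddCircle L) z < 1 := fun i hi h => by
    rw [dist_comm]; exact (hnear z (by linarith) i hi).mpr h
  let A := (I.filter P).image y
  let B := (I.filter fun i => ¬ P i ∧ N i).image y
  have hAB : Disjoint A B := by
    simp only [A, B, Finset.disjoint_left, Finset.mem_image, Finset.mem_filter]
    rintro _ ⟨i, ⟨hi, hPi⟩, rfl⟩ ⟨j, ⟨hj, hPj, -⟩, hji⟩
    exact hPj ((hP i hi j hj hji.symm).mp hPi)
  have hA : ∀ a ∈ A, dist (a : AddCircle L) z < 1 := by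
    simp only [A, Finset.mem_image, Finset.mem_filter]
    rintro _ ⟨i, ⟨hi, hPi⟩, rfl⟩
    exact hclose i hi (hPN i hi hPi)
  have hB : ∀ b ∈ B, dist (b : AddCircle L) z < 1 := by
    simp only [B, Finset.mem_image, Finset.mem_filter]
    rintro _ ⟨i, ⟨hi, -, hNi⟩, rfl⟩
    exact hclose i hi hNi
  obtain ⟨v, -, -, hvA, hvB, hvz⟩ := hgec ⟨z, hzS⟩ A B hAB hA hB (ε / 2) (by positivity)
  have hvt : dist (v : AddCircle L) t < ε := by
    linarith [dist_triangle (v : AddCircle L) z t, show dist (v : AddCircle L) z < ε / 2 from hvz]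
  refine ⟨v, hvt, fun i hi => ⟨fun hadj => ?_, fun hPi => ?_⟩⟩
  · by_contra hPi
    have hNi := (hnear v hvt i hi).mp (hut _ _ hadj)
    exact hvB _ (Finset.mem_image_of_mem _ (Finset.mem_filter.mpr ⟨hi, hPi, hNi⟩)) hadj
  · exact hvA _ (Finset.mem_image_of_mem _ (Finset.mem_filter.mpr ⟨hi, hPi⟩))

variable [Fact (0 < L)]

def rep (z : AddCircle L) : ℝ := AddCircle.equivIco L 0 z

lemma rep_mem (z : AddCircle L) : rep z ∈ Ico 0 L := by
  simpa [rep] using (AddCircle.equivIco L 0 z).2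

@[simp] lemma coe_rep (z : AddCircle L) : ((rep z : ℝ) : AddCircle L) = z :=
  AddCircle.coe_equivIco

lemma rep_coe {x : ℝ} (hx : x ∈ Ico 0 L) : rep (x : AddCircle L) = x :=
  AddCircle.equivIco_coe_of_mem (by simpa using hx)

lemma continuousAt_rep {z : AddCircle L} (hz : z ≠ 0) : ContinuousAt rep z :=
  continuous_subtype_val.continuousAt.comp
    (AddCircle.continuousAt_equivIco L 0 (by simpa using hz))

lemma norm_eq_min_rep (z : AddCircle L) : ‖z‖ = min (rep z) (L - rep z) := by
  have hL : 0 < L := Fact.out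
  obtain ⟨h0, h1⟩ := rep_mem z
  have hfract : Int.fract (L⁻¹ * rep z) = L⁻¹ * rep z :=
    Int.fract_eq_self.mpr ⟨by positivity, by rwa [inv_mul_lt_iff₀ hL, mul_one]⟩
  conv_lhs => rw [← coe_rep z]
  rw [AddCircle.norm_eq' L hL, abs_sub_round_eq_min, hfract, mul_min_of_nonneg _ _ hL.le,
    mul_inv_cancel_left₀ hL.ne', mul_sub, mul_one, mul_inv_cancel_left₀ hL.ne']

/-- The directed distance from `v` to `u`, measured counterclockwise in units of `1/m`. -/
def dirDist (m : ℕ) (u v : AddCircle L) : ℝ := m * rep (u - v)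

def qDist (m : ℕ) (u v : AddCircle L) : ℤ := ⌊dirDist m u v⌋

lemma dirDist_self (m : ℕ) (u : AddCircle L) : dirDist m u u = 0 := by
  have : rep (0 : AddCircle L) = 0 := rep_coe (x := 0) ⟨le_rfl, Fact.out⟩
  simp [dirDist, this]

lemma coe_dirDist_div (hm : 0 < m) (u v : AddCircle L) :
    ((dirDist m u v / m : ℝ) : AddCircle L) = u - v := by
  rw [dirDist, mul_div_cancel_left₀ _ (by positivity), coe_rep]

lemma coe_dirDist_sub_div (hm : 0 < m) (u v w : AddCircle L) :
    (((dirDist m u w - dirDist m v w) / m : ℝ) : AddCircle L) = u - v := by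
  rw [sub_div, AddCircle.coe_sub, coe_dirDist_div hm, coe_dirDist_div hm, sub_sub_sub_cancel_right]

lemma mul_dist_eq_min (hml : (m : ℝ) * L = l) (u v : AddCircle L) :
    m * dist u v = min (dirDist m u v) (l - dirDist m u v) := by
  rw [dist_eq_norm, norm_eq_min_rep, mul_min_of_nonneg _ _ (Nat.cast_nonneg m), mul_sub, hml,
    dirDist]

section

variable (hm : 0 < m) (hml : (m : ℝ) * L = l)
include hm hml

lemma dirDist_mem_Ico (u v : AddCircle L) : dirDist m u v ∈ Ico 0 (l : ℝ) := by
  obtain ⟨h0, h1⟩ := rep_mem (u - v)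
  have hm' : (0 : ℝ) < m := by exact_mod_cast hm
  exact ⟨by unfold dirDist; positivity, by rw [← hml]; exact mul_lt_mul_of_pos_left h1 hm'⟩

lemma qDist_mem_Ico (u v : AddCircle L) : qDist m u v ∈ Ico 0 (l : ℤ) := by
  obtain ⟨h0, h1⟩ := dirDist_mem_Ico hm hml u v
  exact ⟨Int.floor_nonneg.mpr h0, Int.floor_lt.mpr (by exact_mod_cast h1)⟩

lemma exists_dirDist_eq {u v : AddCircle L} {x : ℝ} (h : ((x / m : ℝ) : AddCircle L) = u - v) :
    ∃ n : ℤ, dirDist m u v = x + n * l := by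
  have h0 : ((dirDist m u v / m - x / m : ℝ) : AddCircle L) = 0 := by
    rw [AddCircle.coe_sub, coe_dirDist_div hm, h, sub_self]
  obtain ⟨n, hn⟩ := (AddCircle.coe_eq_zero_iff L).mp h0
  refine ⟨n, ?_⟩
  rw [zsmul_eq_mul] at hn
  field_simp at hn
  rw [← hml]
  linarith

lemma exists_qDist_eq {u v : AddCircle L} {x : ℝ} (h : ((x / m : ℝ) : AddCircle L) = u - v) :
    ∃ n : ℤ, qDist m u v = ⌊x⌋ + n * l := by
  obtain ⟨n, hn⟩ := exists_dirDist_eq hm hml h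
  refine ⟨n, ?_⟩
  rw [qDist, hn, ← Int.floor_add_intCast]
  push_cast
  rfl

lemma dirDist_eq_of_coe {u v : AddCircle L} {x : ℝ} (hx : x ∈ Ico 0 (l : ℝ))
    (h : ((x / m : ℝ) : AddCircle L) = u - v) : dirDist m u v = x := by
  obtain ⟨n, hn⟩ := exists_dirDist_eq hm hml h
  obtain ⟨hD0, hDl⟩ := dirDist_mem_Ico hm hml u v
  have hl : (0 : ℝ) < l := by rw [← hml]; exact mul_pos (by exact_mod_cast hm) Fact.out
  have hn1 : (n : ℝ) < 1 := lt_of_mul_lt_mul_right (by linarith [hx.1]) hl.le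
  have hn2 : (-1 : ℝ) < n := lt_of_mul_lt_mul_right (by linarith [hx.2]) hl.le
  have hn0 : n = 0 := by
    have : n < 1 := by exact_mod_cast hn1
    have : -1 < n := by exact_mod_cast hn2
    omega
  simpa [hn0] using hn

lemma dirDist_swap {u v : AddCircle L} (huv : u ≠ v) : dirDist m v u = l - dirDist m u v := by
  obtain ⟨hD0, hDl⟩ := dirDist_mem_Ico hm hml u v
  have hD0' : dirDist m u v ≠ 0 := by
    intro h0
    apply huv
    rw [← sub_eq_zero, ← coe_dirDist_div hm, h0, zero_div, AddCircle.coe_zero]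
  refine dirDist_eq_of_coe hm hml ⟨by linarith, by linarith [lt_of_le_of_ne hD0 (Ne.symm hD0')]⟩ ?_
  rw [sub_div, ← hml, mul_div_cancel_left₀ _ (by positivity), AddCircle.coe_sub,
    AddCircle.coe_period, coe_dirDist_div hm]
  abel

lemma dist_lt_one_iff (u v : AddCircle L) :
    dist u v < 1 ↔ dirDist m u v < m ∨ (l : ℝ) - m < dirDist m u v := by
  have hm' : (0 : ℝ) < m := by exact_mod_cast hm
  rw [← mul_lt_mul_iff_right₀ hm', mul_one, mul_dist_eq_min hml, min_lt_iff]
  constructor <;> rintro (h | h) <;> first | (left; linarith) | (right; linarith)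

lemma dirDist_mem_Ioo_of_integerDistanceFree {S : Set (AddCircle L)}
    (hS : IntegerDistanceFree m S) {u v : AddCircle L} (hu : u ∈ S) (hv : v ∈ S) (huv : u ≠ v) :
    dirDist m u v ∈ Ioo (qDist m u v : ℝ) (qDist m u v + 1) := by
  refine ⟨lt_of_le_of_ne (Int.floor_le _) fun hint => ?_, Int.lt_floor_add_one _⟩
  -- an integer value `n` of `dirDist m u v` would give `dist u v = min n (l - n) / m`
  obtain ⟨h0, h1⟩ := qDist_mem_Ico hm hml u v
  set j := min (qDist m u v) (l - qDist m u v)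
  have hj : ((j.toNat : ℕ) : ℝ) = j := by exact_mod_cast Int.toNat_of_nonneg (le_min h0 (by omega))
  apply hS u hu v hv huv j.toNat
  rw [eq_div_iff (by positivity), mul_comm, mul_dist_eq_min hml, ← hint, hj, Int.cast_min]
  push_cast
  rfl

lemma fract_dirDist_lt_iff (hl : 2 ≤ l) {x₀ x₁ x₂ y₀ y₁ y₂ : AddCircle L}
    (h₁ : qDist m x₁ x₀ = qDist m y₁ y₀) (h₂ : qDist m x₂ x₀ = qDist m y₂ y₀)
    (h₁₂ : qDist m x₁ x₂ = qDist m y₁ y₂) :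
    Int.fract (dirDist m x₁ x₀) < Int.fract (dirDist m x₂ x₀) ↔
      Int.fract (dirDist m y₁ y₀) < Int.fract (dirDist m y₂ y₀) := by
  -- modulo `l`, `qDist m x₁ x₂` is `qDist m x₁ x₀ - qDist m x₂ x₀` shifted by `0` or `-1`
  -- according to the comparison; as `l ≥ 2`, equal `qDist`s force equal shifts
  obtain ⟨n, hn⟩ := exists_qDist_eq hm hml (coe_dirDist_sub_div hm x₁ x₂ x₀)
  obtain ⟨n', hn'⟩ := exists_qDist_eq hm hml (coe_dirDist_sub_div hm y₁ y₂ y₀)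
  have hfloor : ∀ u v : AddCircle L, ⌊dirDist m u v⌋ = qDist m u v := fun _ _ => rfl
  rw [floor_sub_eq, floor_fract_sub_fract, hfloor, hfloor] at hn hn'
  rw [h₁₂, h₁, h₂, hn'] at hn
  have hdvd : (l : ℤ) ∣
      (if Int.fract (dirDist m x₂ x₀) ≤ Int.fract (dirDist m x₁ x₀) then 0 else -1) -
        (if Int.fract (dirDist m y₂ y₀) ≤ Int.fract (dirDist m y₁ y₀) then 0 else -1) :=
    ⟨n' - n, by linarith⟩
  have hl1 : ¬ (l : ℤ) ∣ 1 := fun h => by have := Int.le_of_dvd one_pos h; omega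
  split_ifs at hdvd with hx hy hy
  · exact ⟨fun h => absurd hx (not_le.mpr h), fun h => absurd hy (not_le.mpr h)⟩
  · exact absurd (by simpa using hdvd) hl1
  · exact absurd (by simpa using hdvd) hl1
  · exact ⟨fun _ => not_le.mp hy, fun _ => not_le.mp hx⟩

lemma dirDist_mem_Ioo_of_fract_between {s x x₀ y y₀ : AddCircle L} {τ : ℝ}
    (hxy : qDist m x x₀ = qDist m y y₀) (hτ0 : 0 < τ) (hτ1 : τ < 1)
    (hlow : Int.fract (dirDist m x x₀) ≤ Int.fract (dirDist m s x₀) →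
      Int.fract (dirDist m y y₀) < τ)
    (hhigh : Int.fract (dirDist m s x₀) < Int.fract (dirDist m x x₀) →
      τ < Int.fract (dirDist m y y₀)) :
    dirDist m (y₀ + (((⌊dirDist m s x₀⌋ + τ) / m : ℝ) : AddCircle L)) y ∈
      Ioo (qDist m s x : ℝ) (qDist m s x + 1) := by
  set a := dirDist m x x₀
  set b := dirDist m y y₀
  set σ := dirDist m s x₀
  obtain ⟨n, hn⟩ := exists_qDist_eq hm hml (coe_dirDist_sub_div hm s x x₀)
  have hb : b = ⌊a⌋ + Int.fract b := by
    rw [show ⌊a⌋ = ⌊b⌋ from hxy, Int.floor_add_fract]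
  have hk : (qDist m s x : ℝ) = ⌊σ⌋ - ⌊a⌋ + n * l
      + if Int.fract a ≤ Int.fract σ then 0 else -1 := by
    rw [hn, floor_sub_eq, floor_fract_sub_fract]
    push_cast
    ring
  set X := ⌊σ⌋ + τ - b + n * l
  have hX : X ∈ Ioo (qDist m s x : ℝ) (qDist m s x + 1) := by
    have hb0 := Int.fract_nonneg b
    have hb1 := Int.fract_lt_one b
    rw [hk]
    split_ifs with h
    · have := hlow h
      constructor <;> linarith
    · have := hhigh (not_le.mp h)
      constructor <;> linarith
  obtain ⟨hk0, hkl⟩ := qDist_mem_Ico hm hml s x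
  have hkl' : (qDist m s x : ℝ) + 1 ≤ l := by exact_mod_cast hkl
  have hk0' : (0 : ℝ) ≤ qDist m s x := by exact_mod_cast hk0
  have hXcoe : ((X / m : ℝ) : AddCircle L) = y₀ + (((⌊σ⌋ + τ) / m : ℝ) : AddCircle L) - y := by
    rw [coe_add_intCast_mul_div hm hml, sub_div, AddCircle.coe_sub, coe_dirDist_div hm]
    abel
  rwa [dirDist_eq_of_coe hm hml ⟨by linarith [hX.1], by linarith [hX.2]⟩ hXcoe]

-- Relative to a base pair `(x i₀, y i₀)`, the fractional parts of the directed distances of the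
-- `x i` and of the `y i` are ordered alike; `τ` is put among the latter where the fractional part
-- for `s` lies among the former.
lemma exists_dirDist_mem_Ioo (hl : 2 ≤ l) {ι : Type*} (I : Finset ι) (x y : ι → AddCircle L)
    (hxy : ∀ i ∈ I, ∀ j ∈ I, qDist m (x i) (x j) = qDist m (y i) (y j)) (s : AddCircle L) :
    ∃ t : AddCircle L, ∀ i ∈ I,
      dirDist m t (y i) ∈ Ioo (qDist m s (x i) : ℝ) (qDist m s (x i) + 1) := by
  classical
  rcases I.eq_empty_or_nonempty with rfl | ⟨i₀, hi₀⟩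
  · exact ⟨0, by simp⟩
  set a := fun i => dirDist m (x i) (x i₀)
  set b := fun i => dirDist m (y i) (y i₀)
  set σ := dirDist m s (x i₀)
  obtain ⟨τ, hlo, hhi⟩ := Order.exists_between_finsets
    ((I.filter fun i => Int.fract (a i) ≤ Int.fract σ).image fun i => Int.fract (b i))
    (insert 1 ((I.filter fun i => Int.fract σ < Int.fract (a i)).image fun i => Int.fract (b i)))
    (by
      simp only [Finset.mem_image, Finset.mem_filter, Finset.mem_insert]
      rintro _ ⟨i, ⟨hi, hia⟩, rfl⟩ _ (rfl | ⟨j, ⟨hj, hja⟩, rfl⟩)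
      · exact Int.fract_lt_one _
      · exact (fract_dirDist_lt_iff hm hml hl (hxy i hi i₀ hi₀) (hxy j hj i₀ hi₀)
          (hxy i hi j hj)).mp (hia.trans_lt hja))
  have hτ0 : 0 < τ := by
    simpa [a, b, dirDist_self] using hlo (Int.fract (b i₀))
      (Finset.mem_image_of_mem _ (Finset.mem_filter.mpr ⟨hi₀, by simp [a, dirDist_self]⟩))
  have hτ1 : τ < 1 := hhi 1 (Finset.mem_insert_self _ _)
  refine ⟨_, fun i hi => dirDist_mem_Ioo_of_fract_between hm hml (hxy i hi i₀ hi₀) hτ0 hτ1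
    (fun h => hlo _ (Finset.mem_image_of_mem _ (Finset.mem_filter.mpr ⟨hi, h⟩)))
    (fun h => hhi _ (Finset.mem_insert_of_mem
      (Finset.mem_image_of_mem _ (Finset.mem_filter.mpr ⟨hi, h⟩))))⟩

end

section

variable {k : ℤ} {u v : AddCircle L}

lemma qDist_eq_of_mem_Ioo (h : dirDist m u v ∈ Ioo (k : ℝ) (k + 1)) : qDist m u v = k :=
  Int.floor_eq_iff.mpr ⟨h.1.le, h.2⟩

lemma ne_of_mem_Ioo (h : dirDist m u v ∈ Ioo (k : ℝ) (k + 1)) : u ≠ v := by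
  rintro rfl
  rw [dirDist_self] at h
  have h1 : k < 0 := by exact_mod_cast h.1
  have h2 : -1 < k := by exact_mod_cast (by linarith [h.2] : (-1 : ℝ) < k)
  omega

variable (hm : 0 < m) (hml : (m : ℝ) * L = l)
include hm hml

lemma qDist_swap_of_mem_Ioo (h : dirDist m u v ∈ Ioo (k : ℝ) (k + 1)) :
    qDist m v u = l - 1 - k := by
  rw [qDist, dirDist_swap hm hml (ne_of_mem_Ioo h), Int.floor_eq_iff]
  push_cast
  constructor <;> linarith [h.1, h.2]

lemma dist_lt_one_iff_of_mem_Ioo (h : dirDist m u v ∈ Ioo (k : ℝ) (k + 1)) :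
    dist u v < 1 ↔ k < m ∨ (l : ℤ) - m ≤ k := by
  rw [dist_lt_one_iff hm hml]
  have e1 : dirDist m u v < m ↔ k < m := by
    constructor
    · intro h'; exact_mod_cast h.1.trans h'
    · intro h'
      have : (k : ℝ) + 1 ≤ m := by exact_mod_cast h'
      linarith [h.2]
  have e2 : (l : ℝ) - m < dirDist m u v ↔ (l : ℤ) - m ≤ k := by
    constructor
    · intro h'
      have : ((l : ℤ) - m : ℝ) < k + 1 := by push_cast; linarith [h.2]
      have : (l : ℤ) - m < k + 1 := by exact_mod_cast this
      omega
    · intro h'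
      have : ((l : ℤ) - m : ℝ) ≤ k := by exact_mod_cast h'
      push_cast at this
      linarith [h.1]
  rw [e1, e2]

end

lemma continuousAt_dirDist {u v : AddCircle L} (huv : u ≠ v) :
    ContinuousAt (fun z => dirDist m z v) u := by
  have hsub : ContinuousAt (fun z : AddCircle L => z - v) u := (continuous_sub_right v).continuousAt
  exact ((continuousAt_rep (sub_ne_zero.mpr huv)).comp (f := fun z => z - v) hsub).const_mul _

section

variable {S₁ S₂ : Set (AddCircle L)} {G₁ : SimpleGraph S₁} {G₂ : SimpleGraph S₂}

def Compatible (m : ℕ) (G₁ : SimpleGraph S₁) (G₂ : SimpleGraph S₂) (p q : S₁ × S₂) : Prop :=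
  (p.1 = q.1 ↔ p.2 = q.2) ∧ (G₁.Adj p.1 q.1 ↔ G₂.Adj p.2 q.2) ∧
    qDist m (p.1 : AddCircle L) q.1 = qDist m (p.2 : AddCircle L) q.2

lemma compatible_swap {p q : S₁ × S₂} :
    Compatible m G₂ G₁ p.swap q.swap ↔ Compatible m G₁ G₂ p q := by
  simp only [Compatible, Prod.fst_swap, Prod.snd_swap, iff_comm, eq_comm]

lemma coherent_map_swap {c : List (S₁ × S₂)} :
    Coherent (Compatible m G₂ G₁) (c.map Prod.swap) ↔ Coherent (Compatible m G₁ G₂) c := by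
  simp only [Coherent, List.mem_map, forall_exists_index, and_imp, forall_apply_eq_imp_iff₂,
    compatible_swap]

lemma compatible_of_mem_Ioo (hm : 0 < m) (hml : (m : ℝ) * L = l) {k : ℤ} {s : S₁} {v : S₂}
    {p : S₁ × S₂} (hs : dirDist m (s : AddCircle L) p.1 ∈ Ioo (k : ℝ) (k + 1))
    (hv : dirDist m (v : AddCircle L) p.2 ∈ Ioo (k : ℝ) (k + 1))
    (hadj : G₁.Adj s p.1 ↔ G₂.Adj v p.2) :
    Compatible m G₁ G₂ (s, v) p ∧ Compatible m G₁ G₂ p (s, v) := by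
  have hsp : s ≠ p.1 := fun h => ne_of_mem_Ioo hs (congrArg Subtype.val h)
  have hvp : v ≠ p.2 := fun h => ne_of_mem_Ioo hv (congrArg Subtype.val h)
  refine ⟨⟨iff_of_false hsp hvp, hadj, ?_⟩, ⟨iff_of_false hsp.symm hvp.symm, ?_, ?_⟩⟩
  · rw [qDist_eq_of_mem_Ioo hs, qDist_eq_of_mem_Ioo hv]
  · rw [G₁.adj_comm, G₂.adj_comm]; exact hadj
  · rw [qDist_swap_of_mem_Ioo hm hml hs, qDist_swap_of_mem_Ioo hm hml hv]

lemma compatible_self (m : ℕ) (s : S₁) (v : S₂) : Compatible m G₁ G₂ (s, v) (s, v) :=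
  ⟨iff_of_true rfl rfl, iff_of_false (G₁.irrefl) (G₂.irrefl), by simp [qDist, dirDist_self]⟩

theorem exists_coherent_cons (hm : 0 < m) (hml : (m : ℝ) * L = l) (hl : 2 ≤ l) (hS₂ : Dense S₂)
    (hidf₁ : IntegerDistanceFree m S₁) (hut₁ : HasUnitThreshold G₁) (hut₂ : HasUnitThreshold G₂)
    (hgec₂ : IsGEC G₂) (c : List (S₁ × S₂)) (hc : Coherent (Compatible m G₁ G₂) c) (s : S₁) :
    ∃ v : S₂, Coherent (Compatible m G₁ G₂) ((s, v) :: c) := by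
  by_cases hdom : ∃ p ∈ c, p.1 = s
  · obtain ⟨p, hp, rfl⟩ := hdom
    refine ⟨p.2, hc.cons fun q hq => ?_⟩
    rcases List.mem_cons.mp hq with rfl | hqc
    · exact ⟨hc _ hp _ hp, hc _ hp _ hp⟩
    · exact ⟨hc _ hp _ hqc, hc _ hqc _ hp⟩
  push Not at hdom
  set I := c.toFinset
  have hcI : ∀ p ∈ I, ∀ q ∈ I, Compatible m G₁ G₂ p q := fun p hp q hq =>
    hc p (List.mem_toFinset.mp hp) q (List.mem_toFinset.mp hq)
  have hsrc : ∀ p ∈ I, dirDist m (s : AddCircle L) p.1 ∈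
      Ioo (qDist m (s : AddCircle L) p.1 : ℝ) (qDist m (s : AddCircle L) p.1 + 1) :=
    fun p hp => dirDist_mem_Ioo_of_integerDistanceFree hm hml hidf₁ s.2 p.1.2
      fun h => hdom p (List.mem_toFinset.mp hp) (Subtype.ext h).symm
  obtain ⟨t, ht⟩ := exists_dirDist_mem_Ioo hm hml hl I (fun p => (p.1 : AddCircle L))
    (fun p => (p.2 : AddCircle L)) (fun p hp q hq => (hcI p hp q hq).2.2) s
  obtain ⟨ε, hε, hU⟩ := Metric.eventually_nhds_iff.mp ((Finset.eventually_all I).mpr fun p hp =>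
    (continuousAt_dirDist (ne_of_mem_Ioo (ht p hp))).eventually (isOpen_Ioo.mem_nhds (ht p hp)))
  obtain ⟨v, hvt, hadj⟩ := exists_adj_iff_of_isGEC hgec₂ hut₂ hS₂ I Prod.snd
    (fun p => G₁.Adj s p.1) (fun p => dist (s : AddCircle L) p.1 < 1)
    (fun p hp q hq h => by rw [(hcI p hp q hq).1.mpr h]) (fun p _ h => hut₁ _ _ h) hε
    fun z hz p hp => by
      rw [dist_lt_one_iff_of_mem_Ioo hm hml (hsrc p hp),
        dist_lt_one_iff_of_mem_Ioo hm hml (hU hz p hp)]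
  refine ⟨v, hc.cons fun q hq => ?_⟩
  rcases List.mem_cons.mp hq with rfl | hqc
  · exact ⟨compatible_self m s v, compatible_self m s v⟩
  have hqI : q ∈ I := List.mem_toFinset.mpr hqc
  exact compatible_of_mem_Ioo hm hml (hsrc q hqI) (hU hvt q hqI) (hadj q hqI).symm

theorem nonempty_iso_of_isGEC (hm : 0 < m) (hml : (m : ℝ) * L = l) (hl : 2 ≤ l)
    (hS₁ : Dense S₁) (hS₁c : S₁.Countable) (hS₂ : Dense S₂) (hS₂c : S₂.Countable)
    (hidf₁ : IntegerDistanceFree m S₁) (hidf₂ : IntegerDistanceFree m S₂)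
    (hgec₁ : IsGEC G₁) (hut₁ : HasUnitThreshold G₁)
    (hgec₂ : IsGEC G₂) (hut₂ : HasUnitThreshold G₂) :
    Nonempty (G₁ ≃g G₂) := by
  have := hS₁c.to_subtype
  have := hS₂c.to_subtype
  have := hS₁.nonempty.to_subtype
  have := hS₂.nonempty.to_subtype
  obtain ⟨e, he⟩ := exists_equiv_of_back_and_forth (Compatible m G₁ G₂) (fun _ _ h => h.1)
    (exists_coherent_cons hm hml hl hS₂ hidf₁ hut₁ hut₂ hgec₂) fun c hc b => by
      obtain ⟨a, ha⟩ := exists_coherent_cons hm hml hl hS₁ hidf₂ hut₂ hut₁ hgec₁ _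
        (coherent_map_swap.mpr hc) b
      exact ⟨a, (coherent_map_swap (c := (a, b) :: c)).mp ha⟩
  exact ⟨⟨e, fun {a b} => (he a b).2.1.symm⟩⟩

end

end UnitThresholdGraph

end

theorem stmt_13_general (l m : ℕ)
    (L : ℝ) (hLdef : L = (l : ℝ) / (m : ℝ)) (hL : 2 < L)
    (S S' : Set (AddCircle L)) (hSdense : Dense S) (hScount : S.Countable)
    (hS'dense : Dense S') (hS'count : S'.Countable)
    (hSidf : IntegerDistanceFree m S) (hS'idf : IntegerDistanceFree m S')
    (G : SimpleGraph S) (hgec : IsGEC G) (hut : HasUnitThreshold G)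
    (G' : SimpleGraph S') (hgec' : IsGEC G') (hut' : HasUnitThreshold G') :
    Nonempty (G ≃g G') := by
  have : Fact (0 < L) := ⟨by linarith⟩
  have hm : 0 < m := Nat.pos_of_ne_zero fun h => by simp [h] at hLdef; linarith
  have hml : (m : ℝ) * L = l := by rw [hLdef]; field_simp
  have hl : 2 ≤ l := by
    have : (2 : ℝ) * m < l := by rw [← hml]; nlinarith [(Nat.one_le_cast (α := ℝ)).mpr hm]
    have : 2 * m < l := by exact_mod_cast this
    omega
  exact UnitThresholdGraph.nonempty_iso_of_isGEC hm hml hl hSdense hScount hS'dense hS'count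
    hSidf hS'idf hgec hut hgec' hut'

/-- For rational `L = ℓ/m > 2` in lowest terms and dense countable integer-distance-free
`S, S' ⊆ ℝ/Lℤ`, any two g.e.c. unit-threshold graphs on `S` and `S'` are isomorphic. -/
theorem stmt_13 (l m : ℕ) (hl : 0 < l) (hm : 0 < m) (hco : Nat.Coprime l m)
    (L : ℝ) (hLdef : L = (l : ℝ) / (m : ℝ)) (hL : 2 < L)
    (S S' : Set (AddCircle L)) (hSdense : Dense S) (hScount : S.Countable)
    (hS'dense : Dense S') (hS'count : S'.Countable)
    (hSidf : IntegerDistanceFree m S) (hS'idf : IntegerDistanceFree m S')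
    (G : SimpleGraph S) (hgec : IsGEC G) (hut : HasUnitThreshold G)
    (G' : SimpleGraph S') (hgec' : IsGEC G') (hut' : HasUnitThreshold G') :
    Nonempty (G ≃g G') :=
  stmt_13_general l m L hLdef hL S S' hSdense hScount hS'dense hS'count hSidf hS'idf G hgec hut G'
    hgec' hut'
end

section
/- Let 2 < L < 3 and write L = 2 + δ with δ ∈ (0,1). Let S be dense in ℝ/Lℤ and G a g.e.c. unit-threshold graph on S. Call a finite U ⊆ S small if some vertex of G is adjacent to all of U, and large otherwise. Then for u, v ∈ S: d(u,v) < δ if and only if there exists a small finite set U ⊆ S such that both U ∪ {u} and U ∪ {v} are large. -/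
/-- A finite set of vertices is *small* if some vertex of `G` is adjacent to all of it. -/
def IsSmall {L : ℝ} {S : Set (AddCircle L)} (G : SimpleGraph S) (U : Finset S) : Prop :=
  ∃ w : S, ∀ u ∈ U, G.Adj w u





lemma norm_coe_le_abs {L : ℝ} (hL : 0 < L) (r : ℝ) : ‖(r : AddCircle L)‖ ≤ |r| := by
  rw [AddCircle.norm_eq (p := L)]
  have h := round_le (L⁻¹ * r) 0
  simp only [Int.cast_zero, sub_zero] at h
  have e0 : r - round (L⁻¹ * r) * L = L * (L⁻¹ * r - round (L⁻¹ * r)) := by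
    field_simp
  have e1 : |r - round (L⁻¹ * r) * L| = L * |L⁻¹ * r - round (L⁻¹ * r)| := by
    rw [e0, abs_mul, abs_of_pos hL]
  have e2 : L * |L⁻¹ * r| = |r| := by
    rw [abs_mul, abs_inv, abs_of_pos hL]
    field_simp
  rw [e1, ← e2]
  nlinarith [abs_nonneg (L⁻¹ * r), abs_nonneg (L⁻¹*r - (round (L⁻¹*r):ℝ))]

lemma exists_lift_norm {L : ℝ} (hL : 0 < L) (y : AddCircle L) :
    ∃ r : ℝ, (r : AddCircle L) = y ∧ |r| = ‖y‖ := by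
  obtain ⟨x, rfl⟩ := QuotientAddGroup.mk_surjective y
  refine ⟨x - round (L⁻¹ * x) * L, ?_, (AddCircle.norm_eq (p := L)).symm⟩
  have : ((round (L⁻¹ * x) * L : ℝ) : AddCircle L) = 0 := by
    rw [AddCircle.coe_eq_zero_iff]
    exact ⟨round (L⁻¹ * x), by rw [zsmul_eq_mul]⟩
  rw [QuotientAddGroup.mk_sub]
  rw [show ((x:ℝ) : AddCircle L) - ((round (L⁻¹ * x) * L : ℝ) : AddCircle L)
      = ((x:ℝ) : AddCircle L) - 0 from by rw [this]]
  simp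

lemma one_le_norm_coe {L : ℝ} (hL2 : 2 < L) {r : ℝ} (h1 : 1 ≤ r) (h2 : r ≤ L - 1) :
    1 ≤ ‖(r : AddCircle L)‖ := by
  rw [AddCircle.norm_eq (p := L)]
  set k : ℤ := round (L⁻¹ * r) with hk
  rcases le_or_gt k 0 with hk0 | hk1
  · have : (k : ℝ) * L ≤ 0 := mul_nonpos_of_nonpos_of_nonneg (by exact_mod_cast hk0) (by linarith)
    rw [abs_of_nonneg (by linarith)]; linarith
  · have : (1 : ℝ) ≤ (k : ℝ) := by exact_mod_cast hk1
    have : L ≤ (k : ℝ) * L := by nlinarith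
    rw [abs_of_nonpos (by linarith)]; linarith





lemma small_of_ball {L : ℝ} {S : Set (AddCircle L)} {G : SimpleGraph S} (hSdense : Dense S) (hgec : IsGEC G)
    (X : Finset S) (c : AddCircle L) (h : ∀ x ∈ X, dist (x : AddCircle L) c < 1) :
    IsSmall G X := by
  have hε : ∃ ε : ℝ, 0 < ε ∧ ∀ x ∈ X, dist (x : AddCircle L) c + ε ≤ 1 := by
    rcases X.eq_empty_or_nonempty with rfl | hX
    · exact ⟨1, one_pos, by simp⟩
    · refine ⟨X.inf' hX fun x => 1 - dist (x : AddCircle L) c, ?_, ?_⟩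
      · rw [Finset.lt_inf'_iff]
        intro x hx; linarith [h x hx]
      · intro x hx
        have := Finset.inf'_le (fun x : S => 1 - dist (x : AddCircle L) c) hx
        linarith
  obtain ⟨ε, hε0, hεle⟩ := hε
  obtain ⟨s, hs⟩ := (Metric.dense_iff.mp hSdense) c ε hε0
  rcases hs with ⟨hball, hsS⟩
  have hdist : ∀ x ∈ X, dist (x : AddCircle L) ((⟨s, hsS⟩ : S) : AddCircle L) < 1 := by
    intro x hx
    calc dist (x : AddCircle L) s ≤ dist (x : AddCircle L) c + dist c s := dist_triangle _ _ _
      _ < (1 - ε) + ε := by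
          have := hεle x hx
          have hcs : dist c s < ε := by rw [dist_comm]; exact Metric.mem_ball.mp hball
          linarith
      _ = 1 := by ring
  obtain ⟨v, _, _, hadj, _, _⟩ := hgec ⟨s, hsS⟩ X ∅ (Finset.disjoint_empty_right _)
    hdist (by simp) 1 one_pos
  exact ⟨v, fun x hx => hadj x hx⟩

lemma far_of_not_small {L : ℝ} {S : Set (AddCircle L)} {G : SimpleGraph S} (hSdense : Dense S) (hgec : IsGEC G)
    {X : Finset S} (h : ¬ IsSmall G X) (c : AddCircle L) :
    ∃ x ∈ X, 1 ≤ dist (x : AddCircle L) c := by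
  by_contra hc
  push_neg at hc
  exact h (small_of_ball hSdense hgec X c hc)

lemma ball_of_small {L : ℝ} {S : Set (AddCircle L)} {G : SimpleGraph S} (hut : HasUnitThreshold G) {X : Finset S} (h : IsSmall G X) :
    ∃ w : S, ∀ x ∈ X, dist (x : AddCircle L) (w : AddCircle L) < 1 := by
  obtain ⟨w, hw⟩ := h
  exact ⟨w, fun x hx => by rw [dist_comm]; exact hut w x (hw x hx)⟩



lemma covering_lemma {L δ : ℝ} {m : ℕ} (hm : 0 < m) (w : ℕ → ℝ)
    (hstep : ∀ k < m, w (k + 1) ≤ w k + δ) (hwrap : w m = w 0 + L)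
    {x : ℝ} (hx1 : w 0 ≤ x) (hx2 : x < w 0 + L) :
    ∃ k, 1 ≤ k ∧ k ≤ m ∧ x < w k ∧ w k ≤ x + δ := by
  classical
  set K : Finset ℕ := (Finset.range m).filter (fun k => w k ≤ x) with hK
  have hKne : K.Nonempty := ⟨0, by simp [hK, hm, hx1]⟩
  set k := K.max' hKne with hkdef
  have hkK : k ∈ K := K.max'_mem hKne
  have hkm : k < m := (Finset.mem_filter.mp hkK).1 |> Finset.mem_range.mp
  have hkx : w k ≤ x := (Finset.mem_filter.mp hkK).2
  have hnext : x < w (k + 1) := by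
    rcases eq_or_lt_of_le (Nat.succ_le_of_lt hkm) with he | hlt
    · have he' : k + 1 = m := he
      rw [he', hwrap]; exact hx2
    · by_contra hcon
      push_neg at hcon
      have : k + 1 ∈ K := by simp [hK, Finset.mem_filter, Finset.mem_range.mpr hlt, hcon]
      have := K.le_max' _ this
      omega
  exact ⟨k + 1, Nat.succ_le_succ (Nat.zero_le _), hkm, hnext,
    le_trans (hstep k hkm) (by linarith)⟩

lemma exists_far_point {L δ : ℝ} (hL2 : 2 < L) (hδ : δ = L - 2) {m : ℕ} (hm : 0 < m)
    (w : ℕ → ℝ) (hstep : ∀ k < m, w (k + 1) ≤ w k + δ) (hwrap : w m = w 0 + L)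
    (c : AddCircle L) :
    ∃ k, 1 ≤ k ∧ k ≤ m ∧ 1 ≤ dist ((w k : ℝ) : AddCircle L) c := by
  have hL0 : (0 : ℝ) < L := by linarith
  obtain ⟨c₀, rfl⟩ := QuotientAddGroup.mk_surjective c
  set t : ℝ := (c₀ + 1 - w 0) / L with ht
  set x : ℝ := w 0 + L * Int.fract t with hx
  have hx1 : w 0 ≤ x := by
    have := Int.fract_nonneg t
    nlinarith
  have hx2 : x < w 0 + L := by
    have := Int.fract_lt_one t
    nlinarith
  obtain ⟨k, hk1, hkm, hxk, hkx⟩ := covering_lemma hm w hstep hwrap hx1 hx2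
  refine ⟨k, hk1, hkm, ?_⟩
  have hxc : x = c₀ + 1 - (⌊t⌋ : ℝ) * L := by
    rw [hx, Int.fract]
    have : (t : ℝ) * L = c₀ + 1 - w 0 := by rw [ht]; field_simp
    nlinarith [this]
  have key : ((w k - c₀ : ℝ) : AddCircle L) = ((w k - x + 1 : ℝ) : AddCircle L) := by
    have hz : ((((⌊t⌋ : ℝ) * L : ℝ)) : AddCircle L) = 0 := by
      rw [AddCircle.coe_eq_zero_iff]
      exact ⟨⌊t⌋, by rw [zsmul_eq_mul]⟩
    have e : (w k - c₀ : ℝ) = (w k - x + 1) - (⌊t⌋ : ℝ) * L := by rw [hxc]; ring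
    rw [e, QuotientAddGroup.mk_sub, hz, sub_zero]
  have hdist : dist ((w k : ℝ) : AddCircle L) ((c₀ : ℝ) : AddCircle L)
      = ‖((w k - c₀ : ℝ) : AddCircle L)‖ := by
    rw [dist_eq_norm, ← QuotientAddGroup.mk_sub]
  rw [hdist, key]
  exact one_le_norm_coe hL2 (by linarith) (by rw [hδ] at hkx; linarith)


set_option maxHeartbeats 1000000 in
lemma construct {L δ : ℝ} (hL2 : 2 < L) (hL3 : L < 3) (hδ : δ = L - 2)
    {S : Set (AddCircle L)} (hSdense : Dense S) {G : SimpleGraph S}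
    (hgec : IsGEC G) (hut : HasUnitThreshold G)
    (u v : S) (u₀ t : ℝ) (hu₀ : ((u₀ : ℝ) : AddCircle L) = (u : AddCircle L))
    (hv₀ : ((u₀ + t : ℝ) : AddCircle L) = (v : AddCircle L))
    (ht0 : 0 ≤ t) (htδ : t < δ) :
    ∃ U : Finset S, IsSmall G U ∧ ¬ IsSmall G (insert u U) ∧ ¬ IsSmall G (insert v U) := by
  classical
  have hδ0 : 0 < δ := by rw [hδ]; linarith
  have hδ1 : δ < 1 := by rw [hδ]; linarith
  have hL0 : (0 : ℝ) < L := by linarith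
  set ε : ℝ := (δ - t) / 8 with hε
  have hε0 : 0 < ε := by rw [hε]; linarith
  have hε8 : 8 * ε = δ - t := by rw [hε]; ring
  have hεδ : ε ≤ δ / 8 := by rw [hε]; linarith
  set a : ℝ := u₀ + δ - 2 * ε with ha
  set b : ℝ := u₀ + t - δ + 2 * ε with hb
  set len : ℝ := b + L - a with hlen'
  have hlen : len = 2 - 4 * ε := by rw [hlen', ha, hb, hδ]; linarith
  have hlenpos : 0 < len := by rw [hlen]; linarith
  have hlen2 : len < 2 := by rw [hlen]; linarith
  set n : ℕ := ⌈(4 : ℝ) / δ⌉₊ with hn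
  have hn4 : (4 : ℝ) / δ ≤ n := Nat.le_ceil _
  have hnpos : 0 < n := Nat.ceil_pos.mpr (by positivity)
  have hnR : (0 : ℝ) < n := by exact_mod_cast hnpos
  have hstepsize : len / n ≤ δ / 2 := by
    rw [div_le_iff₀ hnR]
    have : (4 : ℝ) ≤ δ * n := by
      rw [div_le_iff₀ hδ0] at hn4; linarith [hn4]
    nlinarith
  have hstep0 : 0 < len / n := by positivity
  obtain ⟨y, hycast⟩ : ∃ y : ℕ → ℝ, ∀ j : ℕ, y j = a + len / n * j :=
    ⟨fun j => a + len / n * j, fun j => rfl⟩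
  have hyn : y n = b + L := by
    rw [hycast]
    have : len / ↑n * ↑n = len := by field_simp
    rw [this, hlen']; ring
  have hpick : ∀ j : ℕ, ∃ sz : S × ℝ, ((sz.2 : ℝ) : AddCircle L) = ((sz.1 : S) : AddCircle L)
      ∧ |sz.2 - y j| < ε := by
    intro j
    obtain ⟨p, hpball, hpS⟩ := Metric.dense_iff.mp hSdense (((y j : ℝ) : AddCircle L)) ε hε0
    obtain ⟨r, hr, hrn⟩ := exists_lift_norm hL0 (p - ((y j : ℝ) : AddCircle L))
    refine ⟨⟨⟨p, hpS⟩, y j + r⟩, ?_, ?_⟩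
    · show ((y j + r : ℝ) : AddCircle L) = p
      rw [QuotientAddGroup.mk_add, hr]; abel
    · show |y j + r - y j| < ε
      have : dist p ((y j : ℝ) : AddCircle L) < ε := Metric.mem_ball.mp hpball
      rw [dist_eq_norm] at this
      calc |y j + r - y j| = |r| := by ring_nf
        _ = ‖p - ((y j : ℝ) : AddCircle L)‖ := hrn
        _ < ε := this
  choose f hf1 hf2 using hpick
  obtain ⟨sf, zf, hzfc, hzfy⟩ : ∃ (sf : ℕ → S) (zf : ℕ → ℝ),
      (∀ j, ((zf j : ℝ) : AddCircle L) = ((sf j : S) : AddCircle L)) ∧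
      (∀ j, |zf j - y j| < ε) :=
    ⟨fun j => (f j).1, fun j => (f j).2, hf1, hf2⟩
  set U : Finset S := (Finset.range (n + 1)).image sf with hU
  -- bounds on zf
  have hz0 : zf 0 < u₀ + δ - ε := by
    have h2 := (abs_lt.mp (hzfy 0)).2
    have hy0 : y 0 = a := by simp [hycast]
    rw [hy0] at h2
    linarith
  have hzn : b + L - ε < zf n := by
    have h1 := (abs_lt.mp (hzfy n)).1
    rw [hyn] at h1
    linarith
  -- U is small
  have hUsmall : IsSmall G U := by
    apply small_of_ball hSdense hgec U (((a + len / 2 : ℝ) : AddCircle L))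
    intro x hx
    rw [hU, Finset.mem_image] at hx
    obtain ⟨j, hj, rfl⟩ := hx
    rw [Finset.mem_range] at hj
    have hjn : (j : ℝ) ≤ n := by exact_mod_cast Nat.lt_succ_iff.mp hj
    have hyb1 : 0 ≤ len / n * j := by positivity
    have hyb2 : len / n * j ≤ len := by
      have h1 : len / ↑n * ↑j ≤ len / ↑n * ↑n := by nlinarith
      have h2 : len / ↑n * ↑n = len := by field_simp
      linarith
    have hym : |y j - (a + len / 2)| ≤ len / 2 := by
      rw [hycast, abs_le]
      constructor <;> linarith
    calc dist ((sf j : S) : AddCircle L) (((a + len / 2 : ℝ) : AddCircle L))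
        = ‖((zf j - (a + len / 2) : ℝ) : AddCircle L)‖ := by
          rw [← hzfc j, dist_eq_norm, ← QuotientAddGroup.mk_sub]
      _ ≤ |zf j - (a + len / 2)| := norm_coe_le_abs hL0 _
      _ ≤ |zf j - y j| + |y j - (a + len / 2)| := by
          have : zf j - (a + len / 2) = (zf j - y j) + (y j - (a + len / 2)) := by ring
          rw [this]; exact abs_add_le _ _
      _ < ε + len / 2 := by linarith [hzfy j, hym]
      _ < 1 := by rw [hlen]; linarith
  -- the generic "not small" argument
  have inner : ∀ (p : S) (p₀ : ℝ), ((p₀ : ℝ) : AddCircle L) = (p : AddCircle L) →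
      zf 0 ≤ p₀ + δ → p₀ + L ≤ zf n + δ → ¬ IsSmall G (insert p U) := by
    intro p p₀ hp₀ hc1 hc2 hsm
    obtain ⟨w, hw⟩ := ball_of_small hut hsm
    obtain ⟨W, hW0, hWlast, hWmid⟩ : ∃ W : ℕ → ℝ, W 0 = p₀ ∧ W (n + 2) = p₀ + L ∧
        ∀ k, 1 ≤ k → k ≤ n + 1 → W k = zf (k - 1) := by
      refine ⟨fun k => if k = 0 then p₀ else if k ≤ n + 1 then zf (k - 1) else p₀ + L, ?_, ?_, ?_⟩
      · simp
      · show (if n + 2 = 0 then p₀ else if n + 2 ≤ n + 1 then zf (n + 2 - 1) else p₀ + L) = p₀ + L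
        rw [if_neg (by omega), if_neg (by omega)]
      · intro k h1 h2
        show (if k = 0 then p₀ else if k ≤ n + 1 then zf (k - 1) else p₀ + L) = zf (k - 1)
        rw [if_neg (by omega), if_pos h2]
    have hWstep : ∀ k < n + 2, W (k + 1) ≤ W k + δ := by
      intro k hk
      rcases Nat.eq_zero_or_pos k with rfl | hkpos
      · rw [hW0, hWmid 1 le_rfl (by omega)]
        simpa using hc1
      · rcases Nat.lt_or_ge k (n + 1) with hlt | hge
        · rw [hWmid k hkpos (by omega), hWmid (k + 1) (by omega) (by omega)]
          have hk1 : k - 1 + 1 = k := by omega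
          have e1 : |zf (k - 1) - y (k - 1)| < ε := hzfy _
          have e2 : |zf k - y k| < ε := hzfy _
          have e3 : y k - y (k - 1) = len / n := by
            rw [hycast, hycast]
            have hc : ((k : ℕ) : ℝ) = ((k - 1 : ℕ) : ℝ) + 1 := by
              rw [← Nat.cast_add_one, hk1]
            rw [hc]; ring
          have := abs_lt.mp e1
          have := abs_lt.mp e2
          have hk1' : (k + 1) - 1 = k := by omega
          rw [hk1']
          have : zf k - zf (k - 1) < len / n + 2 * ε := by
            have h1 := (abs_lt.mp e1).2
            have h2 := (abs_lt.mp e2).2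
            have h1' := (abs_lt.mp e1).1
            have h2' := (abs_lt.mp e2).1
            linarith [e3]
          have h2ε : 2 * ε ≤ δ / 4 := by rw [hε]; linarith
          linarith [hstepsize]
        · have hkeq : k = n + 1 := by omega
          subst hkeq
          rw [hWlast, hWmid (n + 1) (by omega) le_rfl]
          simp only [Nat.add_sub_cancel]
          linarith [hc2]
    obtain ⟨k, hk1, hkm, hfar⟩ := exists_far_point hL2 hδ (show 0 < n + 2 by omega)
      W hWstep (by rw [hWlast, hW0]) (w : AddCircle L)
    have hex : ∃ q : S, q ∈ insert p U ∧ ((W k : ℝ) : AddCircle L) = (q : AddCircle L) := by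
      rcases Nat.lt_or_ge k (n + 2) with hlt | hge
      · refine ⟨sf (k - 1), Finset.mem_insert_of_mem ?_, ?_⟩
        · rw [hU, Finset.mem_image]
          exact ⟨k - 1, Finset.mem_range.mpr (by omega), rfl⟩
        · rw [hWmid k hk1 (by omega)]
          exact hzfc _
      · have : k = n + 2 := by omega
        subst this
        refine ⟨p, Finset.mem_insert_self _ _, ?_⟩
        rw [hWlast, QuotientAddGroup.mk_add, hp₀]
        rw [show ((L : ℝ) : AddCircle L) = 0 from AddCircle.coe_period (p := L)]
        abel
    obtain ⟨q, hqmem, hqeq⟩ := hex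
    rw [hqeq] at hfar
    linarith [hw q hqmem]
  have hcu1 : zf 0 ≤ u₀ + δ := by linarith
  have hcu2 : u₀ + L ≤ zf n + δ := by linarith
  have hcv1 : zf 0 ≤ u₀ + t + δ := by linarith
  have hcv2 : u₀ + t + L ≤ zf n + δ := by linarith
  exact ⟨U, hUsmall, inner u u₀ hu₀ hcu1 hcu2, inner v (u₀ + t) hv₀ hcv1 hcv2⟩

set_option maxHeartbeats 1000000 in
lemma reverse_dir {L δ : ℝ} (hL2 : 2 < L) (hL3 : L < 3) (hδ : δ = L - 2)
    {S : Set (AddCircle L)} (hSdense : Dense S) {G : SimpleGraph S}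
    (hgec : IsGEC G) (hut : HasUnitThreshold G) (u v : S) (U : Finset S)
    (hUs : IsSmall G U) (hu : ¬ IsSmall G (insert u U)) (hv : ¬ IsSmall G (insert v U)) :
    dist (u : AddCircle L) (v : AddCircle L) < δ := by
  classical
  have hδ0 : 0 < δ := by rw [hδ]; linarith
  have hδ1 : δ < 1 := by rw [hδ]; linarith
  have hL0 : (0 : ℝ) < L := by linarith
  obtain ⟨w, hw⟩ := ball_of_small hut hUs
  rcases U.eq_empty_or_nonempty with rfl | hUne
  · exfalso
    apply hu
    apply small_of_ball hSdense hgec _ (u : AddCircle L)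
    intro x hx
    have : x = u := by
      rcases Finset.mem_insert.mp hx with h | h
      · exact h
      · exact absurd h (Finset.notMem_empty x)
    rw [this]
    simp
  obtain ⟨w₀, hw₀⟩ := QuotientAddGroup.mk_surjective (w : AddCircle L)
  have hlift : ∀ x : S, ∃ r : ℝ,
      x ∈ U → (((w₀ + r : ℝ) : AddCircle L) = (x : AddCircle L) ∧ |r| < 1) := by
    intro x
    by_cases hx : x ∈ U
    · obtain ⟨r, hr, hrn⟩ := exists_lift_norm hL0 ((x : AddCircle L) - (w : AddCircle L))
      refine ⟨r, fun _ => ⟨?_, ?_⟩⟩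
      · rw [QuotientAddGroup.mk_add, hw₀, hr]; abel
      · rw [hrn, ← dist_eq_norm]; exact hw x hx
    · exact ⟨0, fun h => absurd h hx⟩
  choose g hg using hlift
  obtain ⟨gl, hgl⟩ : ∃ gl : S → ℝ, ∀ x : S, gl x = w₀ + g x := ⟨fun x => w₀ + g x, fun _ => rfl⟩
  have hglc : ∀ x ∈ U, ((gl x : ℝ) : AddCircle L) = (x : AddCircle L) := by
    intro x hx; rw [hgl]; exact (hg x hx).1
  have hglb : ∀ x ∈ U, w₀ - 1 < gl x ∧ gl x < w₀ + 1 := by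
    intro x hx
    have := abs_lt.mp (hg x hx).2
    rw [hgl]
    constructor <;> linarith [this.1, this.2]
  set T : Finset ℝ := U.image gl with hT
  have hTne : T.Nonempty := hUne.image _
  set P : ℝ := T.max' hTne with hP
  set Q : ℝ := T.min' hTne with hQ
  have hPmem : ∃ x ∈ U, gl x = P := Finset.mem_image.mp (T.max'_mem hTne)
  have hQmem : ∃ x ∈ U, gl x = Q := Finset.mem_image.mp (T.min'_mem hTne)
  have hPle : ∀ x ∈ U, gl x ≤ P := fun x hx => T.le_max' _ (Finset.mem_image_of_mem _ hx)
  have hQle : ∀ x ∈ U, Q ≤ gl x := fun x hx => T.min'_le _ (Finset.mem_image_of_mem _ hx)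
  have hPub : P < w₀ + 1 := by
    obtain ⟨x, hx, hxe⟩ := hPmem; rw [← hxe]; exact (hglb x hx).2
  have hQlb : w₀ - 1 < Q := by
    obtain ⟨x, hx, hxe⟩ := hQmem; rw [← hxe]; exact (hglb x hx).1
  have hQP : Q ≤ P := by
    obtain ⟨x, hx, hxe⟩ := hPmem
    rw [← hxe]; exact hQle x hx
  have hgap : δ < Q + L - P := by rw [hδ]; linarith
  have key : ∀ α : ℝ, P < α → α + δ < Q + L → ∀ p : S, ¬ IsSmall G (insert p U) →
      ∃ r : ℝ, ((r : ℝ) : AddCircle L) = (p : AddCircle L) ∧ α ≤ r ∧ r ≤ α + δ := by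
    intro α hα1 hα2 p hp
    have hαQ : α < Q + 2 := by rw [hδ] at hα2; linarith
    have hball : ∀ x ∈ U, dist (x : AddCircle L) (((α - 1 : ℝ) : AddCircle L)) < 1 := by
      intro x hx
      calc dist (x : AddCircle L) (((α - 1 : ℝ) : AddCircle L))
          = ‖((gl x - (α - 1) : ℝ) : AddCircle L)‖ := by
            rw [← hglc x hx, dist_eq_norm, ← QuotientAddGroup.mk_sub]
        _ ≤ |gl x - (α - 1)| := norm_coe_le_abs hL0 _
        _ < 1 := by
            rw [abs_lt]
            constructor
            · linarith [hQle x hx]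
            · linarith [hPle x hx]
    obtain ⟨x, hxmem, hxfar⟩ := far_of_not_small hSdense hgec hp (((α - 1 : ℝ) : AddCircle L))
    have hxp : x = p := by
      rcases Finset.mem_insert.mp hxmem with h | h
      · exact h
      · exact absurd hxfar (not_le.mpr (hball x h))
    subst hxp
    obtain ⟨r₀, hr₀, hrn₀⟩ :=
      exists_lift_norm hL0 ((x : AddCircle L) - ((α - 1 : ℝ) : AddCircle L))
    have habs : 1 ≤ |r₀| := by rw [hrn₀, ← dist_eq_norm]; exact hxfar
    have hhalf : |r₀| ≤ L / 2 := by
      rw [hrn₀]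
      have := AddCircle.norm_le_half_period (p := L)
        (x := ((x : AddCircle L) - ((α - 1 : ℝ) : AddCircle L))) (ne_of_gt hL0)
      rwa [abs_of_pos hL0] at this
    obtain ⟨ρ, hρc, hρ1, hρ2⟩ : ∃ ρ : ℝ,
        ((ρ : ℝ) : AddCircle L) = (x : AddCircle L) - ((α - 1 : ℝ) : AddCircle L) ∧
        1 ≤ ρ ∧ ρ ≤ L - 1 := by
      rcases le_or_gt 0 r₀ with h0 | h0
      · refine ⟨r₀, hr₀, ?_, ?_⟩
        · rwa [abs_of_nonneg h0] at habs
        · rw [abs_of_nonneg h0] at hhalf; linarith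
      · refine ⟨r₀ + L, ?_, ?_, ?_⟩
        · rw [QuotientAddGroup.mk_add,
            show ((L : ℝ) : AddCircle L) = 0 from AddCircle.coe_period (p := L), add_zero, hr₀]
        · rw [abs_of_neg h0] at hhalf; linarith
        · rw [abs_of_neg h0] at habs; linarith
    refine ⟨α - 1 + ρ, ?_, by linarith, by rw [hδ]; linarith⟩
    rw [QuotientAddGroup.mk_add, hρc]
    abel
  obtain ⟨θ, hθdef⟩ : ∃ θ : ℝ, θ = (Q + L - P - δ) / 4 := ⟨_, rfl⟩
  have hθ0 : 0 < θ := by rw [hθdef]; linarith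
  have hα₁ : P < P + θ := by linarith
  have hα₁2 : (P + θ) + δ < Q + L := by rw [hθdef]; linarith
  have hα₂ : P < Q + L - δ - θ := by rw [hθdef]; linarith
  have hα₂2 : (Q + L - δ - θ) + δ < Q + L := by linarith
  obtain ⟨r1, hr1c, hr1l, hr1u⟩ := key (P + θ) hα₁ hα₁2 u hu
  obtain ⟨r2, hr2c, hr2l, hr2u⟩ := key (Q + L - δ - θ) hα₂ hα₂2 u hu
  obtain ⟨s1, hs1c, hs1l, hs1u⟩ := key (P + θ) hα₁ hα₁2 v hv
  obtain ⟨s2, hs2c, hs2l, hs2u⟩ := key (Q + L - δ - θ) hα₂ hα₂2 v hv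
  have hident : ∀ r r' : ℝ, ((r : ℝ) : AddCircle L) = ((r' : ℝ) : AddCircle L) →
      |r - r'| < L → r = r' := by
    intro r r' hcoe hsmall
    have : ((r - r' : ℝ) : AddCircle L) = 0 := by
      rw [QuotientAddGroup.mk_sub, hcoe, sub_self]
    obtain ⟨k, hk⟩ := (AddCircle.coe_eq_zero_iff _).mp this
    rw [zsmul_eq_mul] at hk
    have hkabs : |(k : ℝ)| * L < L := by
      have he : |(k : ℝ) * L| = |(k : ℝ)| * L := by rw [abs_mul, abs_of_pos hL0]
      rw [← he, hk]; exact hsmall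
    have : |(k : ℝ)| < 1 := by
      by_contra hc
      push_neg at hc
      nlinarith
    have : k = 0 := by
      have hk1 : |k| < 1 := by
        exact_mod_cast (by rwa [← Int.cast_abs] at this : ((|k| : ℤ) : ℝ) < 1)
      exact Int.abs_lt_one_iff.mp hk1
    subst this
    simp at hk
    linarith [hk]
  have hθlt : 2 * θ < (Q + L - P) - δ := by rw [hθdef]; linarith
  have hbound1 : r1 - r2 < L := by linarith
  have hbound2 : r2 - r1 < L := by linarith
  have hr12 : r1 = r2 := hident r1 r2 (by rw [hr1c, hr2c]) (abs_lt.mpr ⟨by linarith, hbound1⟩)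
  have hs12 : s1 = s2 := hident s1 s2 (by rw [hs1c, hs2c])
    (abs_lt.mpr ⟨by linarith, by linarith⟩)
  have hfin : |r1 - s1| < δ := by
    have h2 : Q + L - δ - θ ≤ r1 := by rw [hr12]; linarith
    have h4 : Q + L - δ - θ ≤ s1 := by rw [hs12]; linarith
    rw [abs_lt]
    constructor <;> linarith
  calc dist (u : AddCircle L) (v : AddCircle L)
      = ‖((r1 - s1 : ℝ) : AddCircle L)‖ := by
        rw [dist_eq_norm, ← hr1c, ← hs1c, ← QuotientAddGroup.mk_sub]
    _ ≤ |r1 - s1| := norm_coe_le_abs hL0 _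
    _ < δ := hfin


/-- For `2 < L < 3`, `δ = L − 2`, and a g.e.c. unit-threshold graph `G` on a dense
`S ⊆ ℝ/Lℤ`: `d(u,v) < δ` iff there is a small finite `U` with both `U ∪ {u}` and
`U ∪ {v}` large (i.e. not small). -/
theorem stmt_16 (L : ℝ) (hL2 : 2 < L) (hL3 : L < 3)
    (δ : ℝ) (hδ : δ = L - 2)
    (S : Set (AddCircle L)) (hSdense : Dense S)
    (G : SimpleGraph S) (hgec : IsGEC G) (hut : HasUnitThreshold G)
    (u v : S) :
    dist (u : AddCircle L) (v : AddCircle L) < δ ↔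
      ∃ U : Finset S, IsSmall G U ∧
        ¬ IsSmall G (insert u U) ∧ ¬ IsSmall G (insert v U) := by
  constructor
  · intro h
    have hL0 : (0 : ℝ) < L := by linarith
    obtain ⟨u₀, hu₀⟩ := QuotientAddGroup.mk_surjective (u : AddCircle L)
    obtain ⟨d, hd, hdn⟩ := exists_lift_norm hL0 ((v : AddCircle L) - (u : AddCircle L))
    have hdabs : |d| < δ := by
      rw [hdn, ← dist_eq_norm, dist_comm]; exact h
    rcases le_or_gt 0 d with h0 | h0
    · refine construct hL2 hL3 hδ hSdense hgec hut u v u₀ d hu₀ ?_ h0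
        (by rwa [abs_of_nonneg h0] at hdabs)
      rw [QuotientAddGroup.mk_add, hu₀, hd]; abel
    · obtain ⟨U, h1, h2, h3⟩ := construct hL2 hL3 hδ hSdense hgec hut v u (u₀ + d) (-d)
        (by rw [QuotientAddGroup.mk_add, hu₀, hd]; abel)
        (by
          have he : u₀ + d + -d = u₀ := by ring
          rw [he, hu₀])
        (by linarith) (by rwa [abs_of_neg h0] at hdabs)
      exact ⟨U, h1, h3, h2⟩
  · rintro ⟨U, h1, h2, h3⟩
    exact reverse_dir hL2 hL3 hδ hSdense hgec hut u v U h1 h2 h3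
end
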